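/- Assume (Af), (Al), and additionally that for every μ ∈ 𝒫₂(H) the maps (x,q) ↦ f(x,μ,q) and (x,q) ↦ l(x,μ,q) are Borel measurable on H × Λ̃. Then for all Borel measurable X, P : (0,1) → H with ∫_0^1 |X(ω)|² dω < ∞ and ∫_0^1 |P(ω)|² dω < ∞, one has ∫_0^1 𝓗(X(ω), X_#𝓛¹, P(ω)) dω = inf_Q ∫_0^1 ( ⟨f(X(ω), X_#𝓛¹, Q(ω)), P(ω)⟩ + l(X(ω), X_#𝓛¹, Q(ω)) ) dω, where the infimum is taken over all Borel measurable Q : (0,1) → Λ with Q(ω) ∈ Λ̃ for almost every ω and ∫_0^1 |Q(ω)|²_Λ dω < ∞; moreover all the integrals appearing are well-defined and finite. -/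

import Mathlib

/-!
Fix `μ = X_#𝓛¹`. Since `d_r(μ, μ) = d_{-1,r}(μ, μ) = 0`, the maps `f(·, μ, q)` and `l(·, μ, q)`
are Lipschitz uniformly in `q`, so the pre-Hamiltonian `G((x, p), q) = ⟨f(x, μ, q), p⟩ + l(x, μ, q)`
satisfies `|G| ≲ 1 + |x|² + |p|² + |q|²` and is coercive in `q`: `G ≳ |q|² - (1 + |x|² + |p|²)`.
Hence `𝓗(X, μ, P)` is integrable and its integral is at most the cost of any admissible control.
Conversely, `G(·, q)` is equicontinuous over bounded sets of controls and `H × H` is separable, so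
there is one countable set of controls over which `G(z, ·)` has the same infimum as over `Λ̃`, for
every `z`. Picking, for each `ω`, the first of them that is `ε`-optimal at `(X ω, P ω)` gives a
measurable `ε`-optimal control, which is square integrable by coercivity.
-/

open MeasureTheory
open scoped RealInnerProductSpace ENNReal

section

variable {H : Type*} [NormedAddCommGroup H] [InnerProductSpace ℝ H] [CompleteSpace H]
  [SecondCountableTopology H] [MeasurableSpace H] [BorelSpace H]
variable {Λ : Type*} [NormedAddCommGroup Λ] [InnerProductSpace ℝ Λ] [CompleteSpace Λ]
  [SecondCountableTopology Λ] [MeasurableSpace Λ] [BorelSpace Λ]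

/-- `μ` is a Borel probability measure on `H` with finite second moment. -/
def IsP2 (μ : Measure H) : Prop :=
  IsProbabilityMeasure μ ∧ (∫⁻ x, (‖x‖₊ : ℝ≥0∞) ^ 2 ∂μ) < ⊤

/-- The `r`-Wasserstein distance `d_r` on probability measures on `H`. -/
noncomputable def dr (r : ℝ) (μ β : Measure H) : ℝ :=
  sInf { c : ℝ | ∃ γ : Measure (H × H), IsProbabilityMeasure γ ∧
      γ.map Prod.fst = μ ∧ γ.map Prod.snd = β ∧
      c = (∫ p, ‖p.1 - p.2‖ ^ r ∂γ) ^ (1 / r) }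

/-- The weak norm `|x|_{-1} = ⟨Bx, x⟩^{1/2}`. -/
noncomputable def nrmB (B : H →L[ℝ] H) (x : H) : ℝ := Real.sqrt ⟪B x, x⟫

/-- The `r`-Wasserstein distance `d_{-1,r}` with respect to the weak norm `|·|_{-1}`. -/
noncomputable def drB (B : H →L[ℝ] H) (r : ℝ) (μ β : Measure H) : ℝ :=
  sInf { c : ℝ | ∃ γ : Measure (H × H), IsProbabilityMeasure γ ∧
      γ.map Prod.fst = μ ∧ γ.map Prod.snd = β ∧
      c = (∫ p, nrmB B (p.1 - p.2) ^ r ∂γ) ^ (1 / r) }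

/-- The Hamiltonian `𝓗(x,μ,p) = inf_{q ∈ Λ̃} (⟨f(x,μ,q), p⟩ + l(x,μ,q))`. -/
noncomputable def Ham (f : H → Measure H → Λ → H) (l : H → Measure H → Λ → ℝ)
    (Λt : Set Λ) (x : H) (μ : Measure H) (p : H) : ℝ :=
  sInf ((fun q => ⟪f x μ q, p⟫ + l x μ q) '' Λt)


open Set Filter

theorem csInf_image_eq_of_forall_exists_lt_add {ι : Type*} {g : ι → ℝ} {S D : Set ι}
    (hDS : D ⊆ S) (hD : D.Nonempty) (hbdd : BddBelow (g '' S))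
    (hdense : ∀ q ∈ S, ∀ ε > 0, ∃ d ∈ D, g d < g q + ε) :
    sInf (g '' D) = sInf (g '' S) := by
  have hbddD : BddBelow (g '' D) := hbdd.mono (image_mono hDS)
  refine le_antisymm (le_csInf ((hD.image g).mono (image_mono hDS)) ?_)
    (csInf_le_csInf hbdd (hD.image g) (image_mono hDS))
  rintro _ ⟨q, hq, rfl⟩
  refine le_of_forall_pos_le_add fun ε hε => ?_
  obtain ⟨d, hd, hlt⟩ := hdense q hq ε hε
  exact (csInf_le hbddD (mem_image_of_mem g hd)).trans hlt.le

theorem integrable_norm_sq_iff {α β : Type*} [MeasurableSpace α] [SeminormedAddCommGroup β]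
    {ν : Measure α} {Y : α → β} (hY : AEMeasurable (fun ω => ‖Y ω‖) ν) :
    Integrable (fun ω => ‖Y ω‖ ^ 2) ν ↔ (∫⁻ ω, (‖Y ω‖₊ : ℝ≥0∞) ^ 2 ∂ν) < ⊤ := by
  rw [Integrable, and_iff_right (hY.pow_const 2).aestronglyMeasurable, hasFiniteIntegral_iff_enorm]
  simp only [enorm_eq_nnnorm, nnnorm_pow, nnnorm_norm, ENNReal.coe_pow]

section InfimumOverControls

variable {E U : Type*} [NormedAddCommGroup U] {G : E → U → ℝ} {S : Set U}

def admissibleValues {α : Type*} [MeasurableSpace α] [MeasurableSpace U] (ν : Measure α)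
    (S : Set U) (J : α → U → ℝ) : Set ℝ :=
  {v | ∃ Q : α → U, Measurable Q ∧ (∀ᵐ ω ∂ν, Q ω ∈ S) ∧
    (∫⁻ ω, (‖Q ω‖₊ : ℝ≥0∞) ^ 2 ∂ν) < ⊤ ∧ v = ∫ ω, J ω (Q ω) ∂ν}

theorem exists_countable_forall_exists_lt_add [TopologicalSpace E]
    [TopologicalSpace.SeparableSpace E] (hS : S.Nonempty)
    (hequi : ∀ R : ℝ, Equicontinuous fun q : ↥(S ∩ Metric.closedBall 0 R) => fun z => G z q) :
    ∃ D ⊆ S, D.Countable ∧ D.Nonempty ∧ ∀ z, ∀ q ∈ S, ∀ ε > 0, ∃ d ∈ D, G z d < G z q + ε := by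
  obtain ⟨q₀, hq₀⟩ := hS
  obtain ⟨s, hs, hsd⟩ := TopologicalSpace.exists_countable_dense E
  let K : ℕ → Set U := fun n => S ∩ Metric.closedBall 0 n
  -- each `range` below is the chosen witness, or `∅` if there is none
  let D : Set U := insert q₀ <| ⋃ u ∈ s, ⋃ n : ℕ, ⋃ t : ℚ,
    range fun h : ∃ q ∈ K n, G u q < t => h.choose
  refine ⟨D, ?_, (hs.biUnion fun u _ => countable_iUnion fun n => countable_iUnion fun t =>
    countable_range _).insert q₀, insert_nonempty _ _, ?_⟩
  · simp only [D, insert_subset_iff, iUnion_subset_iff, range_subset_iff]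
    exact ⟨hq₀, fun u _ n t h => h.choose_spec.1.1⟩
  intro z q hq ε hε
  have hqK : q ∈ K ⌈‖q‖⌉₊ := ⟨hq, mem_closedBall_zero_iff.2 (Nat.le_ceil _)⟩
  have hnear := Metric.equicontinuousAt_iff_right.1 (hequi ⌈‖q‖⌉₊ z) (ε / 3) (by positivity)
  obtain ⟨u, hus, hu⟩ := hsd.inter_nhds_nonempty hnear
  obtain ⟨t, hqt, htq⟩ := exists_rat_btwn (lt_add_of_pos_right (G u q) (by positivity : 0 < ε / 3))
  have hex : ∃ q' ∈ K ⌈‖q‖⌉₊, G u q' < t := ⟨q, hqK, hqt⟩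
  refine ⟨hex.choose, mem_insert_of_mem _ (mem_biUnion hus
    (mem_iUnion_of_mem _ (mem_iUnion_of_mem t ⟨hex, rfl⟩))), ?_⟩
  have h₁ := hu ⟨_, hex.choose_spec.1⟩
  have h₂ := hu ⟨q, hqK⟩
  simp only [Real.dist_eq, abs_lt] at h₁ h₂
  linarith [hex.choose_spec.2]

variable {ψ : E → ℝ} {A c : ℝ}

theorem bddBelow_image_of_sub_le (hc : 0 ≤ c)
    (hlower : ∀ z, ∀ q ∈ S, c * ‖q‖ ^ 2 - ψ z ≤ G z q) (z : E) : BddBelow (G z '' S) := by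
  refine ⟨-ψ z, ?_⟩
  rintro _ ⟨q, hq, rfl⟩
  nlinarith [hlower z q hq, mul_nonneg hc (sq_nonneg ‖q‖)]

theorem abs_csInf_image_le (hA : 0 ≤ A) (hc : 0 ≤ c)
    (hupper : ∀ z, ∀ q ∈ S, |G z q| ≤ ψ z + A * ‖q‖ ^ 2)
    (hlower : ∀ z, ∀ q ∈ S, c * ‖q‖ ^ 2 - ψ z ≤ G z q) {q₀ : U} (hq₀ : q₀ ∈ S) (z : E) :
    |sInf (G z '' S)| ≤ ψ z + A * ‖q₀‖ ^ 2 := by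
  have hlow : -ψ z ≤ sInf (G z '' S) := by
    refine le_csInf ⟨_, mem_image_of_mem _ hq₀⟩ ?_
    rintro _ ⟨q, hq, rfl⟩
    nlinarith [hlower z q hq, mul_nonneg hc (sq_nonneg ‖q‖)]
  have hup : sInf (G z '' S) ≤ G z q₀ :=
    csInf_le (bddBelow_image_of_sub_le hc hlower z) (mem_image_of_mem _ hq₀)
  have hG := (abs_le.1 (hupper z q₀ hq₀)).2
  have hA' : 0 ≤ A * ‖q₀‖ ^ 2 := by positivity
  exact abs_le.2 ⟨by linarith, by linarith⟩

variable {α : Type*} [MeasurableSpace α] [MeasurableSpace E] [MeasurableSpace U]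
  {ν : Measure α} {Φ : α → E}

theorem integrable_comp_of_admissible [OpensMeasurableSpace U] (hS : S.Nonempty)
    (hGm : Measurable fun y : E × S => G y.1 y.2)
    (hupper : ∀ z, ∀ q ∈ S, |G z q| ≤ ψ z + A * ‖q‖ ^ 2)
    (hΦ : Measurable Φ) (hψΦ : Integrable (fun ω => ψ (Φ ω)) ν) {Q : α → U} (hQ : Measurable Q)
    (hQS : ∀ᵐ ω ∂ν, Q ω ∈ S) (hQ2 : (∫⁻ ω, (‖Q ω‖₊ : ℝ≥0∞) ^ 2 ∂ν) < ⊤) :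
    Integrable (fun ω => G (Φ ω) (Q ω)) ν := by
  obtain ⟨Q', hQ'm, hQ'S, hQQ'⟩ := hQ.aemeasurable.exists_ae_eq_range_subset hQS hS
  have hmeas : AEStronglyMeasurable (fun ω => G (Φ ω) (Q ω)) ν := by
    refine (hGm.comp (hΦ.prodMk (hQ'm.subtype_mk (h := range_subset_iff.1 hQ'S))))
      |>.aestronglyMeasurable.congr ?_
    filter_upwards [hQQ'] with ω h
    simp [h]
  have hQ2' := (integrable_norm_sq_iff hQ.norm.aemeasurable).2 hQ2
  refine (hψΦ.add (hQ2'.const_mul A)).mono' hmeas ?_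
  filter_upwards [hQS] with ω h
  exact hupper _ _ h

variable [TopologicalSpace E] [TopologicalSpace.SeparableSpace E]

theorem measurable_csInf_image (hS : S.Nonempty)
    (hequi : ∀ R : ℝ, Equicontinuous fun q : ↥(S ∩ Metric.closedBall 0 R) => fun z => G z q)
    (hGm : Measurable fun y : E × S => G y.1 y.2) (hbdd : ∀ z, BddBelow (G z '' S)) :
    Measurable fun z => sInf (G z '' S) := by
  obtain ⟨D, hDS, hD, hDne, hdense⟩ := exists_countable_forall_exists_lt_add hS hequi
  simp_rw [← csInf_image_eq_of_forall_exists_lt_add hDS hDne (hbdd _) (hdense _)]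
  exact Measurable.sInf hD fun q hq => hGm.comp (measurable_prodMk_right (y := (⟨q, hDS hq⟩ : S)))

theorem exists_measurable_lt_csInf_add (hS : S.Nonempty)
    (hequi : ∀ R : ℝ, Equicontinuous fun q : ↥(S ∩ Metric.closedBall 0 R) => fun z => G z q)
    (hGm : Measurable fun y : E × S => G y.1 y.2) (hbdd : ∀ z, BddBelow (G z '' S))
    {ε : ℝ} (hε : 0 < ε) :
    ∃ σ : E → U, Measurable σ ∧ (∀ z, σ z ∈ S) ∧ ∀ z, G z (σ z) < sInf (G z '' S) + ε := by
  classical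
  obtain ⟨D, hDS, hD, hDne, hdense⟩ := exists_countable_forall_exists_lt_add hS hequi
  obtain ⟨d, rfl⟩ := hD.exists_eq_range hDne
  have hex : ∀ z, ∃ k, G z (d k) < sInf (G z '' S) + ε := by
    intro z
    have hlt : sInf (G z '' range d) < sInf (G z '' S) + ε := by
      rw [csInf_image_eq_of_forall_exists_lt_add hDS hDne (hbdd z) (hdense z)]
      exact lt_add_of_pos_right _ hε
    obtain ⟨_, ⟨_, ⟨k, rfl⟩, rfl⟩, hk⟩ := exists_lt_of_csInf_lt (hDne.image _) hlt
    exact ⟨k, hk⟩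
  have hmeas : ∀ k, MeasurableSet {z | G z (d k) < sInf (G z '' S) + ε} := fun k =>
    measurableSet_lt (hGm.comp (measurable_prodMk_right (y := (⟨d k, hDS ⟨k, rfl⟩⟩ : S))))
      ((measurable_csInf_image hS hequi hGm hbdd).add_const ε)
  exact ⟨fun z => d (Nat.find (hex z)), measurable_from_nat.comp (measurable_find hex hmeas),
    fun z => hDS ⟨_, rfl⟩, fun z => Nat.find_spec (hex z)⟩

theorem integrable_csInf_image_comp [IsFiniteMeasure ν] (hS : S.Nonempty)
    (hequi : ∀ R : ℝ, Equicontinuous fun q : ↥(S ∩ Metric.closedBall 0 R) => fun z => G z q)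
    (hGm : Measurable fun y : E × S => G y.1 y.2) (hA : 0 ≤ A) (hc : 0 ≤ c)
    (hupper : ∀ z, ∀ q ∈ S, |G z q| ≤ ψ z + A * ‖q‖ ^ 2)
    (hlower : ∀ z, ∀ q ∈ S, c * ‖q‖ ^ 2 - ψ z ≤ G z q)
    (hΦ : Measurable Φ) (hψΦ : Integrable (fun ω => ψ (Φ ω)) ν) :
    Integrable (fun ω => sInf (G (Φ ω) '' S)) ν := by
  obtain ⟨q₀, hq₀⟩ := hS
  have hHm := measurable_csInf_image ⟨q₀, hq₀⟩ hequi hGm (bddBelow_image_of_sub_le hc hlower)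
  exact (hψΦ.add (integrable_const _)).mono' (hHm.comp hΦ).aestronglyMeasurable
    (ae_of_all _ fun ω => abs_csInf_image_le hA hc hupper hlower hq₀ (Φ ω))

variable [OpensMeasurableSpace U]

theorem exists_admissible_integral_le [IsFiniteMeasure ν] (hS : S.Nonempty)
    (hequi : ∀ R : ℝ, Equicontinuous fun q : ↥(S ∩ Metric.closedBall 0 R) => fun z => G z q)
    (hGm : Measurable fun y : E × S => G y.1 y.2) (hA : 0 ≤ A) (hc : 0 < c)
    (hupper : ∀ z, ∀ q ∈ S, |G z q| ≤ ψ z + A * ‖q‖ ^ 2)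
    (hlower : ∀ z, ∀ q ∈ S, c * ‖q‖ ^ 2 - ψ z ≤ G z q)
    (hΦ : Measurable Φ) (hψΦ : Integrable (fun ω => ψ (Φ ω)) ν) {ε : ℝ} (hε : 0 < ε) :
    ∃ v ∈ admissibleValues ν S (fun ω q => G (Φ ω) q),
      v ≤ ∫ ω, sInf (G (Φ ω) '' S) ∂ν + ν.real univ * ε := by
  obtain ⟨σ, hσm, hσS, hσ⟩ := exists_measurable_lt_csInf_add hS hequi hGm
    (bddBelow_image_of_sub_le hc.le hlower) hε
  have hHm := integrable_csInf_image_comp hS hequi hGm hA hc.le hupper hlower hΦ hψΦ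
  have hQ := hσm.comp hΦ
  have hQ2 : Integrable (fun ω => ‖σ (Φ ω)‖ ^ 2) ν := by
    refine (((hHm.add (integrable_const ε)).add hψΦ).const_mul c⁻¹).mono'
      (hQ.norm.pow_const 2).aestronglyMeasurable (ae_of_all _ fun ω => ?_)
    rw [Real.norm_of_nonneg (sq_nonneg _), le_inv_mul_iff₀ hc, Pi.add_apply, Pi.add_apply]
    linarith [hlower (Φ ω) _ (hσS (Φ ω)), hσ (Φ ω)]
  have hQ2' := (integrable_norm_sq_iff hQ.norm.aemeasurable).1 hQ2
  refine ⟨_, ⟨σ ∘ Φ, hQ, ae_of_all _ fun ω => hσS (Φ ω), hQ2', rfl⟩, ?_⟩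
  calc ∫ ω, G (Φ ω) (σ (Φ ω)) ∂ν ≤ ∫ ω, (sInf (G (Φ ω) '' S) + ε) ∂ν :=
        integral_mono (integrable_comp_of_admissible hS hGm hupper hΦ hψΦ hQ
          (ae_of_all _ fun ω => hσS (Φ ω)) hQ2') (hHm.add (integrable_const ε))
          fun ω => (hσ (Φ ω)).le
    _ = ∫ ω, sInf (G (Φ ω) '' S) ∂ν + ν.real univ * ε := by
        rw [integral_add hHm (integrable_const ε), integral_const, smul_eq_mul]

theorem integral_csInf_image_comp_eq [IsFiniteMeasure ν] (hS : S.Nonempty)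
    (hequi : ∀ R : ℝ, Equicontinuous fun q : ↥(S ∩ Metric.closedBall 0 R) => fun z => G z q)
    (hGm : Measurable fun y : E × S => G y.1 y.2) (hA : 0 ≤ A) (hc : 0 < c)
    (hupper : ∀ z, ∀ q ∈ S, |G z q| ≤ ψ z + A * ‖q‖ ^ 2)
    (hlower : ∀ z, ∀ q ∈ S, c * ‖q‖ ^ 2 - ψ z ≤ G z q)
    (hΦ : Measurable Φ) (hψΦ : Integrable (fun ω => ψ (Φ ω)) ν) :
    ∫ ω, sInf (G (Φ ω) '' S) ∂ν = sInf (admissibleValues ν S fun ω q => G (Φ ω) q) := by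
  have hHm := integrable_csInf_image_comp hS hequi hGm hA hc.le hupper hlower hΦ hψΦ
  have hle : ∀ v ∈ admissibleValues ν S (fun ω q => G (Φ ω) q),
      ∫ ω, sInf (G (Φ ω) '' S) ∂ν ≤ v := by
    rintro _ ⟨Q, hQ, hQS, hQ2, rfl⟩
    refine integral_mono_ae hHm (integrable_comp_of_admissible hS hGm hupper hΦ hψΦ hQ hQS hQ2) ?_
    filter_upwards [hQS] with ω hω
    exact csInf_le (bddBelow_image_of_sub_le hc.le hlower _) (mem_image_of_mem _ hω)
  have hnear := fun ε (hε : 0 < ε) =>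
    exists_admissible_integral_le hS hequi hGm hA hc hupper hlower hΦ hψΦ hε
  obtain ⟨v₁, hv₁, -⟩ := hnear 1 one_pos
  refine le_antisymm (le_csInf ⟨v₁, hv₁⟩ hle) (le_of_forall_pos_le_add fun ε hε => ?_)
  obtain ⟨v, hv, hvle⟩ := hnear (ε / (ν.real univ + 1)) (by positivity)
  refine (csInf_le ⟨_, hle⟩ hv).trans (hvle.trans ?_)
  rw [mul_div_assoc']
  gcongr
  rw [div_le_iff₀ (by positivity)]
  nlinarith

end InfimumOverControls

/-- `d_r = transportCost ‖·‖ r` and `d_{-1,r} = transportCost |·|_{-1} r`. -/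
noncomputable def transportCost {E : Type*} [Sub E] [MeasurableSpace E] (c : E → ℝ) (r : ℝ)
    (μ β : Measure E) : ℝ :=
  sInf {t : ℝ | ∃ γ : Measure (E × E), IsProbabilityMeasure γ ∧
    γ.map Prod.fst = μ ∧ γ.map Prod.snd = β ∧ t = (∫ p, c (p.1 - p.2) ^ r ∂γ) ^ (1 / r)}

theorem transportCost_self {E : Type*} [AddGroup E] [MeasurableSpace E] [MeasurableSub₂ E]
    {c : E → ℝ} (hc : Measurable c) (hc0 : c 0 = 0) (hc_nonneg : ∀ v, 0 ≤ c v) {r : ℝ}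
    (hr : 0 < r) (μ : Measure E) [IsProbabilityMeasure μ] : transportCost c r μ μ = 0 := by
  have hdiag : Measurable fun x : E => (x, x) := measurable_id.prodMk measurable_id
  have hcost : Measurable fun p : E × E => c (p.1 - p.2) ^ r :=
    (hc.comp (measurable_fst.sub measurable_snd)).pow_const r
  unfold transportCost
  refine le_antisymm (csInf_le ⟨0, ?nonneg⟩ ?diagonal) (le_csInf ⟨0, ?diagonal⟩ ?nonneg)
  case nonneg =>
    rintro _ ⟨γ, -, -, -, rfl⟩
    exact Real.rpow_nonneg (integral_nonneg fun p => Real.rpow_nonneg (hc_nonneg _) r) _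
  case diagonal =>
    refine ⟨μ.map fun x => (x, x), Measure.isProbabilityMeasure_map hdiag.aemeasurable, ?_, ?_, ?_⟩
    · rw [Measure.map_map measurable_fst hdiag]; exact Measure.map_id
    · rw [Measure.map_map measurable_snd hdiag]; exact Measure.map_id
    · rw [integral_map hdiag.aemeasurable hcost.aestronglyMeasurable]
      simp [hc0, Real.zero_rpow hr.ne', Real.zero_rpow (inv_ne_zero hr.ne')]

theorem nrmB_le {E : Type*} [NormedAddCommGroup E] [InnerProductSpace ℝ E] (B : E →L[ℝ] E)
    (v : E) : nrmB B v ≤ √‖B‖ * ‖v‖ := by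
  have h : ⟪B v, v⟫ ≤ ‖B‖ * ‖v‖ ^ 2 :=
    calc ⟪B v, v⟫ ≤ ‖B v‖ * ‖v‖ := real_inner_le_norm _ _
      _ ≤ ‖B‖ * ‖v‖ * ‖v‖ := by gcongr; exact B.le_opNorm v
      _ = ‖B‖ * ‖v‖ ^ 2 := by ring
  calc nrmB B v ≤ √(‖B‖ * ‖v‖ ^ 2) := Real.sqrt_le_sqrt h
    _ = √‖B‖ * ‖v‖ := by rw [Real.sqrt_mul (norm_nonneg _), Real.sqrt_sq (norm_nonneg v)]

section PreHamiltonian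

variable {E U : Type*} [NormedAddCommGroup E] [InnerProductSpace ℝ E]
  {F : E → U → E} {L : E → U → ℝ} {S : Set U}

def preHamiltonian (F : E → U → E) (L : E → U → ℝ) (z : E × E) (q : U) : ℝ :=
  ⟪F z.1 q, z.2⟫ + L z.1 q

theorem measurable_preHamiltonian [MeasurableSpace E] [BorelSpace E] [SecondCountableTopology E]
    [MeasurableSpace U] (hFm : Measurable fun y : E × S => F y.1 y.2)
    (hLm : Measurable fun y : E × S => L y.1 y.2) :
    Measurable fun y : (E × E) × S => preHamiltonian F L y.1 y.2 := by
  have hproj : Measurable fun y : (E × E) × S => (y.1.1, y.2) :=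
    measurable_fst.fst.prodMk measurable_snd
  exact ((hFm.comp hproj).inner measurable_fst.snd).add (hLm.comp hproj)

variable [NormedAddCommGroup U] {C c M : ℝ}

theorem abs_preHamiltonian_sub_le (hF_lip : ∀ x y, ∀ q ∈ S, ‖F x q - F y q‖ ≤ C * ‖x - y‖)
    (hF_le : ∀ x, ∀ q ∈ S, ‖F x q‖ ≤ C * (1 + ‖x‖ + ‖q‖))
    (hL_lip : ∀ x y, ∀ q ∈ S, |L x q - L y q| ≤ C * ‖x - y‖) {q : U} (hq : q ∈ S) (z₀ z : E × E) :
    |preHamiltonian F L z₀ q - preHamiltonian F L z q| ≤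
      C * (‖z₀.1 - z.1‖ * (‖z₀.2‖ + 1) + (1 + ‖z.1‖ + ‖q‖) * ‖z₀.2 - z.2‖) := by
  obtain ⟨x₀, p₀⟩ := z₀
  obtain ⟨x, p⟩ := z
  have hsplit : preHamiltonian F L (x₀, p₀) q - preHamiltonian F L (x, p) q =
      ⟪F x₀ q - F x q, p₀⟫ + ⟪F x q, p₀ - p⟫ + (L x₀ q - L x q) := by
    simp only [preHamiltonian, inner_sub_left, inner_sub_right]; ring
  have h₁ : |⟪F x₀ q - F x q, p₀⟫| ≤ C * ‖x₀ - x‖ * ‖p₀‖ :=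
    (abs_real_inner_le_norm _ _).trans (by gcongr; exact hF_lip x₀ x q hq)
  have h₂ : |⟪F x q, p₀ - p⟫| ≤ C * (1 + ‖x‖ + ‖q‖) * ‖p₀ - p‖ :=
    (abs_real_inner_le_norm _ _).trans (by gcongr; exact hF_le x q hq)
  have h₃ := hL_lip x₀ x q hq
  rw [hsplit]
  refine (abs_add_le _ _).trans ((add_le_add (abs_add_le _ _) le_rfl).trans ?_)
  dsimp only
  linarith

theorem equicontinuous_preHamiltonian (hC : 0 ≤ C)
    (hF_lip : ∀ x y, ∀ q ∈ S, ‖F x q - F y q‖ ≤ C * ‖x - y‖)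
    (hF_le : ∀ x, ∀ q ∈ S, ‖F x q‖ ≤ C * (1 + ‖x‖ + ‖q‖))
    (hL_lip : ∀ x y, ∀ q ∈ S, |L x q - L y q| ≤ C * ‖x - y‖) (R : ℝ) :
    Equicontinuous fun q : ↥(S ∩ Metric.closedBall 0 R) => fun z => preHamiltonian F L z q := by
  intro z₀
  refine Metric.equicontinuousAt_of_continuity_modulus
    (fun z => C * (‖z₀.1 - z.1‖ * (‖z₀.2‖ + 1) + (1 + ‖z.1‖ + R) * ‖z₀.2 - z.2‖)) ?_ _
    (Eventually.of_forall fun z q => ?_)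
  · exact (by fun_prop : Continuous _).tendsto' z₀ 0 (by simp)
  · refine (abs_preHamiltonian_sub_le hF_lip hF_le hL_lip q.2.1 z₀ z).trans ?_
    have hqR : ‖(q : U)‖ ≤ R := mem_closedBall_zero_iff.1 q.2.2
    gcongr

theorem abs_preHamiltonian_le (hC : 0 ≤ C) (hM : 2 * C ≤ M)
    (hF_le : ∀ x, ∀ q ∈ S, ‖F x q‖ ≤ C * (1 + ‖x‖ + ‖q‖))
    (hL_le : ∀ x, ∀ q ∈ S, |L x q| ≤ C * (1 + ‖x‖ + ‖q‖ ^ 2)) (z : E × E) {q : U} (hq : q ∈ S) :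
    |preHamiltonian F L z q| ≤ M * (1 + ‖z.1‖ ^ 2 + ‖z.2‖ ^ 2) + 2 * C * ‖q‖ ^ 2 := by
  have h₁ : |⟪F z.1 q, z.2⟫| ≤ C * (1 + ‖z.1‖ + ‖q‖) * ‖z.2‖ :=
    (abs_real_inner_le_norm _ _).trans (by gcongr; exact hF_le _ q hq)
  have h₂ := hL_le z.1 q hq
  have hM' : 2 * C * (1 + ‖z.1‖ ^ 2 + ‖z.2‖ ^ 2) ≤ M * (1 + ‖z.1‖ ^ 2 + ‖z.2‖ ^ 2) := by
    gcongr
  refine (abs_add_le _ _).trans ?_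
  nlinarith [mul_nonneg hC (sq_nonneg (‖z.2‖ - 1)), mul_nonneg hC (sq_nonneg (‖z.1‖ - ‖z.2‖)),
    mul_nonneg hC (sq_nonneg (‖q‖ - ‖z.2‖)), mul_nonneg hC (sq_nonneg (‖z.1‖ - 1))]

theorem sub_le_preHamiltonian (hC : 0 ≤ C) (hc : 0 < c) (hM : 2 * C + C ^ 2 / (2 * c) ≤ M)
    (hF_le : ∀ x, ∀ q ∈ S, ‖F x q‖ ≤ C * (1 + ‖x‖ + ‖q‖))
    (hL_ge : ∀ x, ∀ q ∈ S, c * ‖q‖ ^ 2 - C * (1 + ‖x‖) ≤ L x q) (z : E × E) {q : U} (hq : q ∈ S) :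
    c / 2 * ‖q‖ ^ 2 - M * (1 + ‖z.1‖ ^ 2 + ‖z.2‖ ^ 2) ≤ preHamiltonian F L z q := by
  have h₁ : |⟪F z.1 q, z.2⟫| ≤ C * (1 + ‖z.1‖ + ‖q‖) * ‖z.2‖ :=
    (abs_real_inner_le_norm _ _).trans (by gcongr; exact hF_le _ q hq)
  have h₂ := hL_ge z.1 q hq
  have young : C * ‖q‖ * ‖z.2‖ ≤ c / 2 * ‖q‖ ^ 2 + C ^ 2 / (2 * c) * ‖z.2‖ ^ 2 := by
    have : c / 2 * ‖q‖ ^ 2 + C ^ 2 / (2 * c) * ‖z.2‖ ^ 2 - C * ‖q‖ * ‖z.2‖ =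
        (c * ‖q‖ - C * ‖z.2‖) ^ 2 / (2 * c) := by
      field_simp; ring
    nlinarith [this, div_nonneg (sq_nonneg (c * ‖q‖ - C * ‖z.2‖)) (by positivity : (0:ℝ) ≤ 2 * c)]
  have hM' : (2 * C + C ^ 2 / (2 * c)) * (1 + ‖z.1‖ ^ 2 + ‖z.2‖ ^ 2) ≤
      M * (1 + ‖z.1‖ ^ 2 + ‖z.2‖ ^ 2) := by
    gcongr
  have hd : 0 ≤ C ^ 2 / (2 * c) := by positivity
  unfold preHamiltonian
  nlinarith [(abs_le.1 h₁).1, mul_nonneg hC (sq_nonneg (‖z.2‖ - 1)),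
    mul_nonneg hC (sq_nonneg (‖z.1‖ - ‖z.2‖)), mul_nonneg hC (sq_nonneg (‖z.1‖ - 1)),
    mul_nonneg hd (sq_nonneg ‖z.1‖)]

theorem preHamiltonian_integral_representation [MeasurableSpace E] [BorelSpace E]
    [SecondCountableTopology E] [MeasurableSpace U] [OpensMeasurableSpace U] {α : Type*}
    [MeasurableSpace α] {ν : Measure α} [IsFiniteMeasure ν] (hS : S.Nonempty) (hC : 0 ≤ C)
    (hc : 0 < c) (hF_lip : ∀ x y, ∀ q ∈ S, ‖F x q - F y q‖ ≤ C * ‖x - y‖)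
    (hF_le : ∀ x, ∀ q ∈ S, ‖F x q‖ ≤ C * (1 + ‖x‖ + ‖q‖))
    (hL_lip : ∀ x y, ∀ q ∈ S, |L x q - L y q| ≤ C * ‖x - y‖)
    (hL_le : ∀ x, ∀ q ∈ S, |L x q| ≤ C * (1 + ‖x‖ + ‖q‖ ^ 2))
    (hL_ge : ∀ x, ∀ q ∈ S, c * ‖q‖ ^ 2 - C * (1 + ‖x‖) ≤ L x q)
    (hFm : Measurable fun y : E × S => F y.1 y.2) (hLm : Measurable fun y : E × S => L y.1 y.2)
    {X P : α → E} (hX : Measurable X) (hP : Measurable P)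
    (hX2 : (∫⁻ ω, (‖X ω‖₊ : ℝ≥0∞) ^ 2 ∂ν) < ⊤) (hP2 : (∫⁻ ω, (‖P ω‖₊ : ℝ≥0∞) ^ 2 ∂ν) < ⊤) :
    Integrable (fun ω => sInf (preHamiltonian F L (X ω, P ω) '' S)) ν ∧
      (∀ Q : α → U, Measurable Q → (∀ᵐ ω ∂ν, Q ω ∈ S) →
        (∫⁻ ω, (‖Q ω‖₊ : ℝ≥0∞) ^ 2 ∂ν) < ⊤ →
        Integrable (fun ω => preHamiltonian F L (X ω, P ω) (Q ω)) ν) ∧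
      ∫ ω, sInf (preHamiltonian F L (X ω, P ω) '' S) ∂ν =
        sInf (admissibleValues ν S fun ω q => preHamiltonian F L (X ω, P ω) q) := by
  set M := 2 * C + C ^ 2 / (2 * c)
  have hψ : Integrable (fun ω => M * (1 + ‖X ω‖ ^ 2 + ‖P ω‖ ^ 2)) ν :=
    (((integrable_const 1).add ((integrable_norm_sq_iff hX.norm.aemeasurable).2 hX2)).add
      ((integrable_norm_sq_iff hP.norm.aemeasurable).2 hP2)).const_mul M
  have hequi := equicontinuous_preHamiltonian hC hF_lip hF_le hL_lip
  have hGm := measurable_preHamiltonian hFm hLm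
  have hupper := fun z q (hq : q ∈ S) =>
    abs_preHamiltonian_le (M := M) hC (le_add_of_nonneg_right (by positivity)) hF_le hL_le z hq
  have hlower := fun z q (hq : q ∈ S) =>
    sub_le_preHamiltonian (M := M) hC hc le_rfl hF_le hL_ge z hq
  have hΦ : Measurable fun ω => (X ω, P ω) := hX.prodMk hP
  have hA : 0 ≤ 2 * C := by positivity
  exact ⟨integrable_csInf_image_comp hS hequi hGm hA (half_pos hc).le hupper hlower hΦ hψ,
    fun Q hQ hQS hQ2 => integrable_comp_of_admissible hS hGm hupper hΦ hψ hQ hQS hQ2,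
    integral_csInf_image_comp_eq hS hequi hGm hA (half_pos hc) hupper hlower hΦ hψ⟩

end PreHamiltonian

theorem drift_lipschitz_and_linear_growth {E U W : Type*} [SeminormedAddCommGroup E]
    [NormedAddCommGroup U] [SeminormedAddCommGroup W] {f₁ : E → W} {f₂ : E → U → W}
    {S : Set U} {K C : ℝ} (hS : S.Nonempty)
    (hlip : ∀ x y, ∀ q ∈ S, ‖f₁ x - f₁ y‖ + ‖f₂ x q - f₂ y q‖ ≤ K * ‖x - y‖)
    (hgrowth : ∀ x, ∀ q ∈ S, ‖f₂ x q‖ ≤ K * (1 + ‖q‖)) (hC : K + ‖f₁ 0‖ ≤ C) :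
    (∀ x y, ∀ q ∈ S, ‖f₁ x + f₂ x q - (f₁ y + f₂ y q)‖ ≤ C * ‖x - y‖) ∧
      ∀ x, ∀ q ∈ S, ‖f₁ x + f₂ x q‖ ≤ C * (1 + ‖x‖ + ‖q‖) := by
  obtain ⟨q₀, hq₀⟩ := hS
  have hKC : 0 ≤ C - K := by linarith [norm_nonneg (f₁ 0)]
  refine ⟨fun x y q hq => ?_, fun x q hq => ?_⟩
  · calc ‖f₁ x + f₂ x q - (f₁ y + f₂ y q)‖ = ‖(f₁ x - f₁ y) + (f₂ x q - f₂ y q)‖ := by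
          congr 1; abel
      _ ≤ ‖f₁ x - f₁ y‖ + ‖f₂ x q - f₂ y q‖ := norm_add_le _ _
      _ ≤ C * ‖x - y‖ := by nlinarith [hlip x y q hq, mul_nonneg hKC (norm_nonneg (x - y))]
  · have h₁ : ‖f₁ x‖ ≤ ‖f₁ 0‖ + K * ‖x‖ := by
      have := hlip x 0 q₀ hq₀
      rw [sub_zero] at this
      linarith [norm_le_insert' (f₁ x) (f₁ 0), norm_nonneg (f₂ x q₀ - f₂ 0 q₀)]
    calc ‖f₁ x + f₂ x q‖ ≤ ‖f₁ x‖ + ‖f₂ x q‖ := norm_add_le _ _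
      _ ≤ C * (1 + ‖x‖ + ‖q‖) := by
          nlinarith [hgrowth x q hq, mul_nonneg hKC (norm_nonneg x), mul_nonneg hKC (norm_nonneg q)]

theorem cost_lipschitz_and_quadratic_bounds {E U : Type*} [SeminormedAddCommGroup E]
    [NormedAddCommGroup U] {l₁ : E → ℝ} {l₂ : E → U → ℝ} {S : Set U} {K C₁ C₂ C₃ C : ℝ}
    (hS : S.Nonempty) (hK : 0 ≤ K) (hC₁ : 0 ≤ C₁) (hC₂ : 0 ≤ C₂) (hC₃ : 0 ≤ C₃)
    (hlip : ∀ x y, ∀ q ∈ S, |l₁ x - l₁ y| + |l₂ x q - l₂ y q| ≤ K * ‖x - y‖)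
    (hbd : ∀ x, ∀ q ∈ S, -C₁ + C₂ * ‖q‖ ^ 2 ≤ l₂ x q ∧ l₂ x q ≤ C₁ + C₃ * ‖q‖ ^ 2)
    (hC : K + |l₁ 0| + C₁ + C₃ ≤ C) :
    (∀ x y, ∀ q ∈ S, |l₁ x + l₂ x q - (l₁ y + l₂ y q)| ≤ C * ‖x - y‖) ∧
      (∀ x, ∀ q ∈ S, |l₁ x + l₂ x q| ≤ C * (1 + ‖x‖ + ‖q‖ ^ 2)) ∧
      ∀ x, ∀ q ∈ S, C₂ * ‖q‖ ^ 2 - C * (1 + ‖x‖) ≤ l₁ x + l₂ x q := by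
  obtain ⟨q₀, hq₀⟩ := hS
  have hKC : 0 ≤ C - K := by linarith [abs_nonneg (l₁ 0)]
  have h₁ : ∀ x, |l₁ x| ≤ |l₁ 0| + K * ‖x‖ := fun x => by
    have := hlip x 0 q₀ hq₀
    rw [sub_zero] at this
    linarith [abs_sub_abs_le_abs_sub (l₁ x) (l₁ 0), abs_nonneg (l₂ x q₀ - l₂ 0 q₀)]
  refine ⟨fun x y q hq => ?_, fun x q hq => ?_, fun x q hq => ?_⟩
  · calc |l₁ x + l₂ x q - (l₁ y + l₂ y q)| = |(l₁ x - l₁ y) + (l₂ x q - l₂ y q)| := by ring_nf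
      _ ≤ |l₁ x - l₁ y| + |l₂ x q - l₂ y q| := abs_add_le _ _
      _ ≤ C * ‖x - y‖ := by nlinarith [hlip x y q hq, mul_nonneg hKC (norm_nonneg (x - y))]
  · have h₂ : |l₂ x q| ≤ C₁ + C₃ * ‖q‖ ^ 2 :=
      abs_le.2 ⟨by nlinarith [(hbd x q hq).1, sq_nonneg ‖q‖], (hbd x q hq).2⟩
    calc |l₁ x + l₂ x q| ≤ |l₁ x| + |l₂ x q| := abs_add_le _ _
      _ ≤ C * (1 + ‖x‖ + ‖q‖ ^ 2) := by
          nlinarith [h₁ x, mul_nonneg hKC (norm_nonneg x), sq_nonneg ‖q‖, abs_nonneg (l₁ 0)]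
  · nlinarith [(abs_le.1 (h₁ x)).1, (hbd x q hq).1, mul_nonneg hKC (norm_nonneg x),
      abs_nonneg (l₁ 0)]

theorem statement7_general
    (r : ℝ) (hr1 : 1 ≤ r)
    (B : H →L[ℝ] H)
    (f₁ : H → Measure H → H) (f₂ : H → Measure H → Λ → H)
    (l₁ : H → Measure H → ℝ) (l₂ : H → Measure H → Λ → ℝ)
    (Λt : Set Λ) (hΛne : Λt.Nonempty)
    -- Assumption (Af)
    (Cf : ℝ) (hCf : 0 ≤ Cf)
    (hf_lip : ∀ (x y : H) (μ β : Measure H) (q : Λ), IsP2 μ → IsP2 β → q ∈ Λt →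
      ‖f₁ x μ - f₁ y β‖ + ‖f₂ x μ q - f₂ y β q‖ ≤ Cf * (‖x - y‖ + dr r μ β))
    (hf₂bd : ∀ (x : H) (μ : Measure H) (q : Λ), IsP2 μ → q ∈ Λt →
      ‖f₂ x μ q‖ ≤ Cf * (1 + ‖q‖))
    -- Assumption (Al)
    (Cl : ℝ) (hCl : 0 ≤ Cl)
    (hl_lip : ∀ (x y : H) (μ β : Measure H) (q : Λ), IsP2 μ → IsP2 β → q ∈ Λt →
      |l₁ x μ - l₁ y β| + |l₂ x μ q - l₂ y β q| ≤ Cl * (nrmB B (x - y) + drB B r μ β))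
    (C₁ C₂ C₃ : ℝ) (hC₁ : 0 ≤ C₁) (hC₂ : 0 < C₂) (hC₃ : 0 < C₃)
    (hl₂bd : ∀ (x : H) (μ : Measure H) (q : Λ), IsP2 μ → q ∈ Λt →
      -C₁ + C₂ * ‖q‖ ^ 2 ≤ l₂ x μ q ∧ l₂ x μ q ≤ C₁ + C₃ * ‖q‖ ^ 2)
    (hfm : ∀ μ : Measure H,
      Measurable (fun z : H × Λt => f₁ z.1 μ + f₂ z.1 μ (z.2 : Λ)))
    (hlm : ∀ μ : Measure H,
      Measurable (fun z : H × Λt => l₁ z.1 μ + l₂ z.1 μ (z.2 : Λ)))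
    (X P : ℝ → H) (hXm : Measurable X) (hPm : Measurable P)
    (hX2 : (∫⁻ ω in Set.Ioo (0:ℝ) 1, (‖X ω‖₊ : ℝ≥0∞) ^ 2) < ⊤)
    (hP2 : (∫⁻ ω in Set.Ioo (0:ℝ) 1, (‖P ω‖₊ : ℝ≥0∞) ^ 2) < ⊤) :
    Integrable
      (fun ω => Ham (fun a ν q => f₁ a ν + f₂ a ν q) (fun a ν q => l₁ a ν + l₂ a ν q) Λt
        (X ω) (Measure.map X (volume.restrict (Set.Ioo (0:ℝ) 1))) (P ω))
      (volume.restrict (Set.Ioo (0:ℝ) 1)) ∧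
    (∀ Q : ℝ → Λ, Measurable Q →
      (∀ᵐ ω ∂(volume.restrict (Set.Ioo (0:ℝ) 1)), Q ω ∈ Λt) →
      (∫⁻ ω in Set.Ioo (0:ℝ) 1, (‖Q ω‖₊ : ℝ≥0∞) ^ 2) < ⊤ →
      Integrable
        (fun ω =>
          ⟪f₁ (X ω) (Measure.map X (volume.restrict (Set.Ioo (0:ℝ) 1))) +
              f₂ (X ω) (Measure.map X (volume.restrict (Set.Ioo (0:ℝ) 1))) (Q ω), P ω⟫ +
            (l₁ (X ω) (Measure.map X (volume.restrict (Set.Ioo (0:ℝ) 1))) +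
              l₂ (X ω) (Measure.map X (volume.restrict (Set.Ioo (0:ℝ) 1))) (Q ω)))
        (volume.restrict (Set.Ioo (0:ℝ) 1))) ∧
    (∫ ω in Set.Ioo (0:ℝ) 1,
        Ham (fun a ν q => f₁ a ν + f₂ a ν q) (fun a ν q => l₁ a ν + l₂ a ν q) Λt
          (X ω) (Measure.map X (volume.restrict (Set.Ioo (0:ℝ) 1))) (P ω))
      = sInf { v : ℝ | ∃ Q : ℝ → Λ, Measurable Q ∧
          (∀ᵐ ω ∂(volume.restrict (Set.Ioo (0:ℝ) 1)), Q ω ∈ Λt) ∧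
          (∫⁻ ω in Set.Ioo (0:ℝ) 1, (‖Q ω‖₊ : ℝ≥0∞) ^ 2) < ⊤ ∧
          v = ∫ ω in Set.Ioo (0:ℝ) 1,
            (⟪f₁ (X ω) (Measure.map X (volume.restrict (Set.Ioo (0:ℝ) 1))) +
                f₂ (X ω) (Measure.map X (volume.restrict (Set.Ioo (0:ℝ) 1))) (Q ω), P ω⟫ +
              (l₁ (X ω) (Measure.map X (volume.restrict (Set.Ioo (0:ℝ) 1))) +
                l₂ (X ω) (Measure.map X (volume.restrict (Set.Ioo (0:ℝ) 1))) (Q ω))) } := by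
  set ν : Measure ℝ := volume.restrict (Set.Ioo (0:ℝ) 1)
  have : IsProbabilityMeasure ν := ⟨by simp [ν]⟩
  set μ : Measure H := Measure.map X ν
  have hμ : IsP2 μ := ⟨Measure.isProbabilityMeasure_map hXm.aemeasurable,
    by rwa [lintegral_map (by fun_prop) hXm]⟩
  have := hμ.1
  have hr : 0 < r := by linarith
  have hdr : dr r μ μ = 0 := transportCost_self measurable_norm norm_zero norm_nonneg hr μ
  have hdrB : drB B r μ μ = 0 :=
    transportCost_self (Real.continuous_sqrt.comp (B.continuous.inner continuous_id)).measurable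
      (by simp) (fun _ => Real.sqrt_nonneg _) hr μ
  have hKl : 0 ≤ Cl * √‖B‖ := by positivity
  set C := Cf + ‖f₁ 0 μ‖ + (Cl * √‖B‖ + |l₁ 0 μ| + C₁ + C₃)
  obtain ⟨hF_lip, hF_le⟩ := drift_lipschitz_and_linear_growth (f₁ := fun x => f₁ x μ)
    (f₂ := fun x q => f₂ x μ q) (C := C) hΛne
    (fun x y q hq => by simpa [hdr] using hf_lip x y μ μ q hμ hμ hq)
    (fun x q hq => hf₂bd x μ q hμ hq) (le_add_of_nonneg_right (by positivity))
  obtain ⟨hL_lip, hL_le, hL_ge⟩ := cost_lipschitz_and_quadratic_bounds (l₁ := fun x => l₁ x μ)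
    (l₂ := fun x q => l₂ x μ q) (C := C) hΛne hKl hC₁ hC₂.le hC₃.le
    (fun x y q hq => (hl_lip x y μ μ q hμ hμ hq).trans (by
      rw [hdrB, add_zero, mul_assoc]; gcongr; exact nrmB_le B _))
    (fun x q hq => hl₂bd x μ q hμ hq) (le_add_of_nonneg_left (by positivity))
  have hC : 0 ≤ C := by positivity
  exact preHamiltonian_integral_representation hΛne hC hC₂ hF_lip hF_le hL_lip hL_le hL_ge
    (hfm μ) (hlm μ) hXm hPm hX2 hP2

/-- Representation of the lifted Hamiltonian: under (Af), (Al) and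
Borel measurability of `f` and `l` on `H × Λ̃`, for square-integrable Borel
`X, P : (0,1) → H`,
`∫ 𝓗(X(ω), X_#𝓛¹, P(ω)) dω = inf_Q ∫ (⟨f(X(ω),X_#𝓛¹,Q(ω)), P(ω)⟩ + l(X(ω),X_#𝓛¹,Q(ω))) dω`,
the infimum being over admissible square-integrable `Q` with values in `Λ̃`, and all
integrals appearing are well defined and finite. -/
theorem statement7
    (r : ℝ) (hr1 : 1 ≤ r) (hr2 : r < 2)
    (B : H →L[ℝ] H)
    (hBsa : ∀ x y : H, ⟪B x, y⟫ = ⟪x, B y⟫)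
    (hBpos : ∀ x : H, x ≠ 0 → 0 < ⟪B x, x⟫)
    (f₁ : H → Measure H → H) (f₂ : H → Measure H → Λ → H)
    (l₁ : H → Measure H → ℝ) (l₂ : H → Measure H → Λ → ℝ)
    (Λt : Set Λ) (hΛne : Λt.Nonempty) (hΛconv : Convex ℝ Λt)
    -- Assumption (Af)
    (Cf : ℝ) (hCf : 0 ≤ Cf)
    (hf_lip : ∀ (x y : H) (μ β : Measure H) (q : Λ), IsP2 μ → IsP2 β → q ∈ Λt →
      ‖f₁ x μ - f₁ y β‖ + ‖f₂ x μ q - f₂ y β q‖ ≤ Cf * (‖x - y‖ + dr r μ β))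
    (hf₂bd : ∀ (x : H) (μ : Measure H) (q : Λ), IsP2 μ → q ∈ Λt →
      ‖f₂ x μ q‖ ≤ Cf * (1 + ‖q‖))
    -- Assumption (Al)
    (Cl : ℝ) (hCl : 0 ≤ Cl)
    (hl_lip : ∀ (x y : H) (μ β : Measure H) (q : Λ), IsP2 μ → IsP2 β → q ∈ Λt →
      |l₁ x μ - l₁ y β| + |l₂ x μ q - l₂ y β q| ≤ Cl * (nrmB B (x - y) + drB B r μ β))
    (C₁ C₂ C₃ : ℝ) (hC₁ : 0 ≤ C₁) (hC₂ : 0 < C₂) (hC₃ : 0 < C₃)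
    (hl₂bd : ∀ (x : H) (μ : Measure H) (q : Λ), IsP2 μ → q ∈ Λt →
      -C₁ + C₂ * ‖q‖ ^ 2 ≤ l₂ x μ q ∧ l₂ x μ q ≤ C₁ + C₃ * ‖q‖ ^ 2)
    (hfm : ∀ μ : Measure H,
      Measurable (fun z : H × Λt => f₁ z.1 μ + f₂ z.1 μ (z.2 : Λ)))
    (hlm : ∀ μ : Measure H,
      Measurable (fun z : H × Λt => l₁ z.1 μ + l₂ z.1 μ (z.2 : Λ)))
    (X P : ℝ → H) (hXm : Measurable X) (hPm : Measurable P)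
    (hX2 : (∫⁻ ω in Set.Ioo (0:ℝ) 1, (‖X ω‖₊ : ℝ≥0∞) ^ 2) < ⊤)
    (hP2 : (∫⁻ ω in Set.Ioo (0:ℝ) 1, (‖P ω‖₊ : ℝ≥0∞) ^ 2) < ⊤) :
    Integrable
      (fun ω => Ham (fun a ν q => f₁ a ν + f₂ a ν q) (fun a ν q => l₁ a ν + l₂ a ν q) Λt
        (X ω) (Measure.map X (volume.restrict (Set.Ioo (0:ℝ) 1))) (P ω))
      (volume.restrict (Set.Ioo (0:ℝ) 1)) ∧
    (∀ Q : ℝ → Λ, Measurable Q →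
      (∀ᵐ ω ∂(volume.restrict (Set.Ioo (0:ℝ) 1)), Q ω ∈ Λt) →
      (∫⁻ ω in Set.Ioo (0:ℝ) 1, (‖Q ω‖₊ : ℝ≥0∞) ^ 2) < ⊤ →
      Integrable
        (fun ω =>
          ⟪f₁ (X ω) (Measure.map X (volume.restrict (Set.Ioo (0:ℝ) 1))) +
              f₂ (X ω) (Measure.map X (volume.restrict (Set.Ioo (0:ℝ) 1))) (Q ω), P ω⟫ +
            (l₁ (X ω) (Measure.map X (volume.restrict (Set.Ioo (0:ℝ) 1))) +
              l₂ (X ω) (Measure.map X (volume.restrict (Set.Ioo (0:ℝ) 1))) (Q ω)))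
        (volume.restrict (Set.Ioo (0:ℝ) 1))) ∧
    (∫ ω in Set.Ioo (0:ℝ) 1,
        Ham (fun a ν q => f₁ a ν + f₂ a ν q) (fun a ν q => l₁ a ν + l₂ a ν q) Λt
          (X ω) (Measure.map X (volume.restrict (Set.Ioo (0:ℝ) 1))) (P ω))
      = sInf { v : ℝ | ∃ Q : ℝ → Λ, Measurable Q ∧
          (∀ᵐ ω ∂(volume.restrict (Set.Ioo (0:ℝ) 1)), Q ω ∈ Λt) ∧
          (∫⁻ ω in Set.Ioo (0:ℝ) 1, (‖Q ω‖₊ : ℝ≥0∞) ^ 2) < ⊤ ∧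
          v = ∫ ω in Set.Ioo (0:ℝ) 1,
            (⟪f₁ (X ω) (Measure.map X (volume.restrict (Set.Ioo (0:ℝ) 1))) +
                f₂ (X ω) (Measure.map X (volume.restrict (Set.Ioo (0:ℝ) 1))) (Q ω), P ω⟫ +
              (l₁ (X ω) (Measure.map X (volume.restrict (Set.Ioo (0:ℝ) 1))) +
                l₂ (X ω) (Measure.map X (volume.restrict (Set.Ioo (0:ℝ) 1))) (Q ω))) } :=
  statement7_general r hr1 B f₁ f₂ l₁ l₂ Λt hΛne Cf hCf hf_lip hf₂bd Cl hCl hl_lip C₁ C₂ C₃ hC₁ hC₂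
    hC₃ hl₂bd hfm hlm X P hXm hPm hX2 hP2
end
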